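/- arXiv:1305.0636 — 2 statements merged into one kernel-verified Lean document; each statement's English description precedes it below -/
import Mathlib

section
/- For every finite graph G, lcw(G) − 1 ≤ lcw(complement of G) ≤ lcw(G) + 1, where lcw denotes linear clique-width. -/
/-! ## Common definitions

Linear clique-width (lcw) expressions and derived notions, following
Brignall–Lozin–Stacho, "Bichain graphs: geometric model and universal graphs" /
"Linear clique-width of subclasses of cographs".

An lcw expression over a label alphabet `L` is a list of operations:
insert a new vertex with a given label, add all edges between two distinct
label classes, or relabel one label class to another.  Vertices are indexed
by the natural numbers `0, 1, 2, …` in order of insertion. -/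

/-- The three kinds of operations of an lcw expression. -/
inductive LcwOp (L : Type) where
  | insert : L → LcwOp L
  | join : L → L → LcwOp L
  | relabel : L → L → LcwOp L

/-- The state while executing an lcw expression: the number `n` of vertices
inserted so far (the vertices are `0, …, n-1`), the adjacency relation built
so far, and the current labeling (`none` for indices not yet inserted). -/
structure LcwState (L : Type) where
  n : ℕ
  adj : ℕ → ℕ → Prop
  lab : ℕ → Option L

/-- The initial, empty state. -/
def LcwState.init (L : Type) : LcwState L :=
  ⟨0, fun _ _ => False, fun _ => none⟩

/-- Executing one operation. -/
def LcwState.step {L : Type} [DecidableEq L] (s : LcwState L) : LcwOp L → LcwState L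
  | .insert a => ⟨s.n + 1, s.adj, fun v => if v = s.n then some a else s.lab v⟩
  | .join i j =>
      ⟨s.n,
       fun u v => s.adj u v ∨
         (u ≠ v ∧ ((s.lab u = some i ∧ s.lab v = some j) ∨
                   (s.lab u = some j ∧ s.lab v = some i))),
       s.lab⟩
  | .relabel i j => ⟨s.n, s.adj, fun v => if s.lab v = some i then some j else s.lab v⟩

/-- Executing an lcw expression (a list of operations) from the empty state. -/
def runLcw {L : Type} [DecidableEq L] (e : List (LcwOp L)) : LcwState L :=
  e.foldl LcwState.step (LcwState.init L)

/-- Well-formedness: every edge-adding operation uses two distinct labels. -/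
def WfExpr {L : Type} (e : List (LcwOp L)) : Prop :=
  ∀ op ∈ e, ∀ i j : L, op = LcwOp.join i j → i ≠ j

/-- The expression `e` builds the graph `G`, where the bijection
`f` sends each vertex of `G` to its insertion index (so `f` records the
insertion order of the vertices). -/
def BuildsVia {L V : Type} [DecidableEq L] [Fintype V] (e : List (LcwOp L))
    (G : SimpleGraph V) (f : V → ℕ) : Prop :=
  WfExpr e ∧ Function.Injective f ∧ (runLcw e).n = Fintype.card V ∧
    (∀ v, f v < (runLcw e).n) ∧ ∀ u v, G.Adj u v ↔ (runLcw e).adj (f u) (f v)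

/-- The expression `e` builds the graph `G`. -/
def Builds {L V : Type} [DecidableEq L] [Fintype V] (e : List (LcwOp L))
    (G : SimpleGraph V) : Prop :=
  ∃ f : V → ℕ, BuildsVia e G f

/-- The linear clique-width of a finite graph: the least size of a label
alphabet over which some lcw expression builds `G`.  (An expression over
`Fin k` is an expression using `k` labels; an *efficient* expression for `G`
is one over `Fin (lcw G)`.) -/
noncomputable def lcw {V : Type} [Fintype V] (G : SimpleGraph V) : ℕ :=
  sInf {k : ℕ | ∃ e : List (LcwOp (Fin k)), Builds e G}

/-- `ℓ` is a sink label of the expression `e`: it is never used in an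
edge-adding operation and vertices labeled `ℓ` are never relabeled. -/
def SinkLabel {L : Type} (e : List (LcwOp L)) (ℓ : L) : Prop :=
  (∀ op ∈ e, ∀ i j : L, op = LcwOp.join i j → i ≠ ℓ ∧ j ≠ ℓ) ∧
  (∀ op ∈ e, ∀ j : L, op = LcwOp.relabel ℓ j → j = ℓ)

/-- An expression is sink-free if no label is a sink label. -/
def SinkFree {L : Type} (e : List (LcwOp L)) : Prop :=
  ∀ ℓ : L, ¬ SinkLabel e ℓ

/-- The disjoint union of two graphs. -/
def GraphDisjUnion {V W : Type} (G : SimpleGraph V) (H : SimpleGraph W) :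
    SimpleGraph (V ⊕ W) where
  Adj x y :=
    match x, y with
    | Sum.inl a, Sum.inl b => G.Adj a b
    | Sum.inr a, Sum.inr b => H.Adj a b
    | _, _ => False
  symm := by
    constructor
    rintro (a | a) (b | b) h
    · exact G.adj_symm h
    · exact h.elim
    · exact h.elim
    · exact H.adj_symm h
  loopless := by
    constructor
    rintro (a | a) h
    · exact G.irrefl h
    · exact H.irrefl h

/-- The join of two graphs: their disjoint union together with all edges
between the two sides. -/
def GraphJoin {V W : Type} (G : SimpleGraph V) (H : SimpleGraph W) :
    SimpleGraph (V ⊕ W) :=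
  (GraphDisjUnion Gᶜ Hᶜ)ᶜ

/-- `H` is (isomorphic to) an induced subgraph of `G`. -/
def InducedSubgraphOf {W V : Type} (H : SimpleGraph W) (G : SimpleGraph V) : Prop :=
  ∃ f : W ↪ V, ∀ a b : W, H.Adj a b ↔ G.Adj (f a) (f b)

/-- The path `P₄` on four vertices (edges 01, 12, 23). -/
def pathP4 : SimpleGraph (Fin 4) :=
  SimpleGraph.fromRel (fun a b => (b : ℕ) = (a : ℕ) + 1)

/-- The cycle `C₄` on four vertices (edges 01, 12, 23, 30). -/
def cycleC4 : SimpleGraph (Fin 4) :=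
  SimpleGraph.fromRel (fun a b => (b : ℕ) = (a : ℕ) + 1 ∨ ((a : ℕ) = 3 ∧ (b : ℕ) = 0))

/-- The graph `2K₂` (edges 01 and 23). -/
def twoK2 : SimpleGraph (Fin 4) :=
  SimpleGraph.fromRel (fun a b => ((a : ℕ) = 0 ∧ (b : ℕ) = 1) ∨ ((a : ℕ) = 2 ∧ (b : ℕ) = 3))

/-- Cographs: the graphs with no induced `P₄`. -/
def IsCograph {V : Type} (G : SimpleGraph V) : Prop :=
  ¬ InducedSubgraphOf pathP4 G

/-- Quasi-threshold (trivially perfect) graphs: no induced `P₄` and no induced `C₄`. -/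
def IsQuasiThreshold {V : Type} (G : SimpleGraph V) : Prop :=
  ¬ InducedSubgraphOf pathP4 G ∧ ¬ InducedSubgraphOf cycleC4 G

/-- Threshold graphs: no induced `P₄`, `C₄` or `2K₂`. -/
def IsThreshold {V : Type} (G : SimpleGraph V) : Prop :=
  ¬ InducedSubgraphOf pathP4 G ∧ ¬ InducedSubgraphOf cycleC4 G ∧ ¬ InducedSubgraphOf twoK2 G

/-- A finite graph, encoded with vertex set `Fin n`.  A *class* of graphs,
i.e. a set of finite graphs closed under isomorphism, is modelled as a
hereditary set of `FinGraph`s (hereditary sets are automatically closed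
under isomorphism). -/
def FinGraph : Type := Σ n : ℕ, SimpleGraph (Fin n)

/-- The complement of a finite graph. -/
def FinGraph.compl (G : FinGraph) : FinGraph := ⟨G.1, G.2ᶜ⟩

/-- The induced-subgraph order on finite graphs. -/
def IndF (H G : FinGraph) : Prop := InducedSubgraphOf H.2 G.2

/-- A set of finite graphs is hereditary if it is closed downward under the
induced subgraph order (in particular it is closed under isomorphism). -/
def Hereditary (C : Set FinGraph) : Prop :=
  ∀ G ∈ C, ∀ H : FinGraph, IndF H G → H ∈ C

/-- The finite graph `K` is isomorphic to the graph `G`. -/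
def IsoTo {V : Type} (K : FinGraph) (G : SimpleGraph V) : Prop :=
  ∃ e : Fin K.1 ≃ V, ∀ a b, K.2.Adj a b ↔ G.Adj (e a) (e b)

/-- The class `C` contains (a copy of) the graph `G`. -/
def MemUpToIso (C : Set FinGraph) {V : Type} (G : SimpleGraph V) : Prop :=
  ∃ K ∈ C, IsoTo K G

/-- `C` is closed under disjoint unions. -/
def ClosedUnderDisjointUnions (C : Set FinGraph) : Prop :=
  ∀ G ∈ C, ∀ H ∈ C, MemUpToIso C (GraphDisjUnion (Sigma.snd G) (Sigma.snd H))

/-- `C` is closed under joins. -/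
def ClosedUnderJoins (C : Set FinGraph) : Prop :=
  ∀ G ∈ C, ∀ H ∈ C, MemUpToIso C (GraphJoin (Sigma.snd G) (Sigma.snd H))

/-- `C` is atomic: it cannot be written as the union of two proper
hereditary subclasses. -/
def AtomicClass (C : Set FinGraph) : Prop :=
  ¬ ∃ D₁ D₂ : Set FinGraph, Hereditary D₁ ∧ Hereditary D₂ ∧
      D₁ ⊂ C ∧ D₂ ⊂ C ∧ C = D₁ ∪ D₂

/-- The inflation `G[H₁, …, Hₙ]` of a graph `G` on `Fin n` by graphs
`H i` (`i : Fin n`): substitute `H i` for the vertex `i` of `G`. -/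
def inflate {n : ℕ} (G : SimpleGraph (Fin n)) (m : Fin n → ℕ)
    (H : ∀ i : Fin n, SimpleGraph (Fin (m i))) :
    SimpleGraph (Σ i : Fin n, Fin (m i)) where
  Adj x y := (x.1 ≠ y.1 ∧ G.Adj x.1 y.1) ∨ ∃ h : x.1 = y.1, (H y.1).Adj (h ▸ x.2) y.2
  symm := by
    constructor
    rintro ⟨i, a⟩ ⟨j, b⟩ (⟨hne, hadj⟩ | ⟨h, hadj⟩)
    · exact Or.inl ⟨hne.symm, G.adj_symm hadj⟩
    · cases h
      exact Or.inr ⟨rfl, (H i).adj_symm hadj⟩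
  loopless := by
    constructor
    rintro ⟨i, a⟩ (⟨hne, _⟩ | ⟨h, hadj⟩)
    · exact hne rfl
    · exact (H i).irrefl hadj

/-- The inflation `C[D]` of the class `C` by the class `D`: all graphs
isomorphic to an inflation of a graph of `C` by graphs of `D`. -/
def classInflate (C D : Set FinGraph) : Set FinGraph :=
  {K | ∃ (n : ℕ) (G : SimpleGraph (Fin n)) (m : Fin n → ℕ)
        (H : ∀ i : Fin n, SimpleGraph (Fin (m i))),
      (⟨n, G⟩ : FinGraph) ∈ C ∧ (∀ i, (⟨m i, H i⟩ : FinGraph) ∈ D) ∧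
      IsoTo K (inflate G m H)}

/-- The class of threshold graphs (as finite graphs). -/
def thresholdClass : Set FinGraph := {G : FinGraph | IsThreshold G.2}

/-- Vertex types of the sequence witnessing unbounded linear clique-width:
`qtV 0` carries `G₁ = K₂` and `qtV (k+1)` carries
`G_{k+2} = K₁ ∗ ((G_{k+1} ∪ G_{k+1}) ∪ (G_{k+1} ∪ G_{k+1}))`. -/
def qtV : ℕ → Type
  | 0 => Fin 2
  | k + 1 => Unit ⊕ ((qtV k ⊕ qtV k) ⊕ (qtV k ⊕ qtV k))

instance qtVFintype : ∀ k : ℕ, Fintype (qtV k)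
  | 0 => inferInstanceAs (Fintype (Fin 2))
  | k + 1 =>
      letI := qtVFintype k
      inferInstanceAs (Fintype (Unit ⊕ ((qtV k ⊕ qtV k) ⊕ (qtV k ⊕ qtV k))))

/-- The graphs `G₁, G₂, …` of the paper, reindexed so that `qtG k = G_{k+1}`:
`qtG 0 = K₂` and `qtG (k+1) = K₁ ∗ ((qtG k ∪ qtG k) ∪ (qtG k ∪ qtG k))`. -/
def qtG : ∀ k : ℕ, SimpleGraph (qtV k)
  | 0 => (⊤ : SimpleGraph (Fin 2))
  | k + 1 =>
      GraphJoin (⊥ : SimpleGraph Unit)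
        (GraphDisjUnion (GraphDisjUnion (qtG k) (qtG k)) (GraphDisjUnion (qtG k) (qtG k)))

/-!
Given an expression for `G`, run it with one fresh extra label. Each vertex is inserted with the
fresh label, joined to every label class of earlier vertices that are non-adjacent to it in `G`,
and then relabelled to its original label; the joins of the original expression are dropped.
This is well defined because vertices that share a label when a vertex is inserted are treated
identically by the rest of the expression, so they are all adjacent or all non-adjacent to it in
`G`. The result builds `Gᶜ` with `lcw G + 1` labels; applied to `Gᶜ` it gives the lower bound.
-/

namespace LcwState

variable {L : Type}

structure Valid (s : LcwState L) : Prop where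
  isSome_lab_iff : ∀ v, (s.lab v).isSome ↔ v < s.n
  lt_of_adj : ∀ {u v}, s.adj u v → u < s.n ∧ v < s.n
  adj_symm : ∀ {u v}, s.adj u v → s.adj v u

theorem valid_init : (init L).Valid :=
  ⟨fun _ => by simp [init], fun h => h.elim, fun h => h⟩

variable [DecidableEq L]

theorem Valid.step {s : LcwState L} (hs : s.Valid) (op : LcwOp L) : (s.step op).Valid := by
  obtain ⟨hlab, hlt, hsymm⟩ := hs
  cases op with
  | insert a =>
    refine ⟨fun v => ?_, fun h => ?_, hsymm⟩
    · by_cases hv : v = s.n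
      · simp [LcwState.step, hv]
      · simp only [LcwState.step, hv, if_false, hlab]
        omega
    · have := hlt h; simp only [LcwState.step]; omega
  | join i j =>
    refine ⟨hlab, fun h => ?_, fun h => ?_⟩
    · rcases h with h | ⟨-, ⟨hu, hv⟩ | ⟨hu, hv⟩⟩
      · exact hlt h
      all_goals exact ⟨(hlab _).1 (by simp [hu]), (hlab _).1 (by simp [hv])⟩
    · rcases h with h | ⟨hne, h⟩
      · exact Or.inl (hsymm h)
      · exact Or.inr ⟨hne.symm, h.symm.imp And.symm And.symm⟩
  | relabel i j =>
    refine ⟨fun v => ?_, hlt, hsymm⟩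
    by_cases hv : s.lab v = some i <;> simp [LcwState.step, hv, ← hlab]

theorem Valid.foldl {s : LcwState L} (hs : s.Valid) (l : List (LcwOp L)) :
    (l.foldl LcwState.step s).Valid := by
  induction l generalizing s with
  | nil => exact hs
  | cons op l ih => exact ih (hs.step op)

theorem foldl_adj_iff_of_lab_eq (l : List (LcwOp L)) {s : LcwState L} {u w m : ℕ}
    (hu : u < s.n) (hw : w < s.n) (hum : u ≠ m) (hwm : w ≠ m) (hlab : s.lab u = s.lab w)
    (hadj : s.adj u m ↔ s.adj w m) :
    (l.foldl step s).adj u m ↔ (l.foldl step s).adj w m := by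
  induction l generalizing s with
  | nil => exact hadj
  | cons op l ih =>
    refine ih ?_ ?_ ?_ ?_ <;> cases op <;>
      simp only [step, Nat.ne_of_lt hu, Nat.ne_of_lt hw, ↓reduceIte, hlab, hadj, hum, hwm, ne_eq,
        not_false_eq_true, true_and, Order.lt_add_one_iff] <;> omega

theorem Valid.foldl_insert_adj_iff_of_lab_eq {s : LcwState L} (hs : s.Valid) (a : L)
    (l : List (LcwOp L)) {u w : ℕ} (hu : u < s.n) (hw : w < s.n) (hl : s.lab u = s.lab w) :
    (l.foldl LcwState.step (s.step (.insert a))).adj u s.n ↔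
      (l.foldl LcwState.step (s.step (.insert a))).adj w s.n := by
  have hnot : ∀ x, ¬ s.adj x s.n := fun x hx => (hs.lt_of_adj hx).2.false
  refine foldl_adj_iff_of_lab_eq l ?_ ?_ hu.ne hw.ne ?_ ?_ <;>
    simp only [LcwState.step, hu.ne, hw.ne, ↓reduceIte, hl, hnot, Order.lt_add_one_iff] <;> omega

theorem foldl_map_insert (ls : List L) :
    (ls.map LcwOp.insert).foldl step (init L) =
      ⟨ls.length, fun _ _ => False, fun v => ls[v]?⟩ := by
  induction ls using List.reverseRecOn with
  | nil => simp [init]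
  | append_singleton ls a ih =>
    simp only [List.map_append, List.foldl_append, ih, List.map_cons, List.map_nil,
      List.foldl_cons, List.foldl_nil, step, List.length_append, List.length_singleton, mk.injEq,
      true_and]
    funext v
    grind

theorem foldl_map_join (ps : List (L × L)) (s : LcwState L) :
    (ps.map fun p => LcwOp.join p.1 p.2).foldl step s =
      ⟨s.n, fun u v => s.adj u v ∨ ∃ p ∈ ps, u ≠ v ∧
        ((s.lab u = some p.1 ∧ s.lab v = some p.2) ∨
          (s.lab u = some p.2 ∧ s.lab v = some p.1)),
       s.lab⟩ := by
  induction ps generalizing s with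
  | nil => simp
  | cons p ps ih =>
    simp only [List.map_cons, List.foldl_cons, ih, step, mk.injEq, true_and, and_true]
    funext u v
    simp only [List.exists_mem_cons_iff, or_assoc]

end LcwState

def LcwOp.map {L L' : Type} (f : L → L') : LcwOp L → LcwOp L'
  | .insert a => .insert (f a)
  | .join i j => .join (f i) (f j)
  | .relabel i j => .relabel (f i) (f j)

def LcwState.mapLab {L L' : Type} (f : L → L') (s : LcwState L) : LcwState L' :=
  ⟨s.n, s.adj, fun v => (s.lab v).map f⟩

section Relabel

variable {L L' : Type} [DecidableEq L] [DecidableEq L'] {f : L → L'}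

theorem LcwState.step_map (hf : f.Injective) (s : LcwState L) (op : LcwOp L) :
    (s.mapLab f).step (op.map f) = (s.step op).mapLab f := by
  have hsome : ∀ (x : Option L) (i : L), x.map f = some (f i) ↔ x = some i := fun x i => by
    rw [← Option.map_some, (Option.map_injective hf).eq_iff]
  cases op <;> simp only [LcwState.mapLab, LcwOp.map, LcwState.step, LcwState.mk.injEq, hsome,
    true_and] <;> funext v <;> split_ifs <;> simp_all

theorem runLcw_map (hf : f.Injective) (e : List (LcwOp L)) :
    runLcw (e.map (LcwOp.map f)) = (runLcw e).mapLab f := by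
  rw [runLcw, runLcw, List.foldl_map]
  exact List.foldl_hom (g₂ := fun (s : LcwState L') (op : LcwOp L) => s.step (op.map f))
    (init := LcwState.init L) _ (LcwState.step_map hf)

theorem Builds.map {V : Type} [Fintype V] {G : SimpleGraph V} {e : List (LcwOp L)}
    (h : Builds e G) (hf : f.Injective) : Builds (e.map (LcwOp.map f)) G := by
  obtain ⟨φ, hwf, hinj, hn, hlt, hadj⟩ := h
  refine ⟨φ, ?_, hinj, ?_⟩
  · intro op hop i j hij
    obtain ⟨op₀, hop₀, rfl⟩ := List.mem_map.1 hop
    cases op₀ <;> simp only [LcwOp.map, reduceCtorEq, LcwOp.join.injEq] at hij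
    obtain ⟨rfl, rfl⟩ := hij
    exact hf.ne (hwf _ hop₀ _ _ rfl)
  · simpa only [runLcw_map hf] using ⟨hn, hlt, hadj⟩

end Relabel

section Width

variable {L V : Type} [DecidableEq L] [Fintype L] [Fintype V]

theorem Builds.exists_fin {G : SimpleGraph V} {e : List (LcwOp L)} (h : Builds e G) :
    ∃ e' : List (LcwOp (Fin (Fintype.card L))), Builds e' G :=
  ⟨_, h.map (Fintype.equivFin L).injective⟩

theorem lcw_le_card_of_builds {G : SimpleGraph V} {e : List (LcwOp L)} (h : Builds e G) :
    lcw G ≤ Fintype.card L :=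
  Nat.sInf_le h.exists_fin

theorem SimpleGraph.exists_builds [DecidableEq V] (G : SimpleGraph V) :
    ∃ e : List (LcwOp V), Builds e G := by
  classical
  set ls := (Finset.univ : Finset V).toList
  set ps := (Finset.univ.filter fun p : V × V => G.Adj p.1 p.2).toList
  have hls : ∀ v, v ∈ ls := by simp [ls]
  have hps : ∀ p, p ∈ ps ↔ G.Adj p.1 p.2 := by simp [ps]
  have hrun : runLcw (ls.map .insert ++ ps.map fun p => .join p.1 p.2) =
      ⟨ls.length, fun u v => False ∨ ∃ p ∈ ps, u ≠ v ∧
        ((ls[u]? = some p.1 ∧ ls[v]? = some p.2) ∨ (ls[u]? = some p.2 ∧ ls[v]? = some p.1)),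
       fun v => ls[v]?⟩ := by
    rw [runLcw, List.foldl_append, LcwState.foldl_map_insert, LcwState.foldl_map_join]
  refine ⟨ls.map .insert ++ ps.map fun p => .join p.1 p.2, ls.idxOf, ?_, ?_, ?_, ?_, ?_⟩
  · intro op hop i j hij
    simp only [List.mem_append, List.mem_map] at hop
    rcases hop with ⟨v, -, rfl⟩ | ⟨p, hp, rfl⟩
    · cases hij
    · cases hij
      exact ((hps p).1 hp).ne
  · intro u v h
    exact (List.idxOf_inj (hls u)).1 h
  · simp [hrun, ls]
  · simpa [hrun] using fun v => List.idxOf_lt_length_iff.2 (hls v)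
  · intro u v
    simp only [hrun, hls, hps, List.getElem?_idxOf, Option.some.injEq, List.idxOf_inj, ne_eq,
      false_or, Prod.exists]
    constructor
    · exact fun h => ⟨u, v, h, h.ne, Or.inl ⟨rfl, rfl⟩⟩
    · rintro ⟨a, b, h, -, ⟨rfl, rfl⟩ | ⟨rfl, rfl⟩⟩
      exacts [h, h.symm]

theorem exists_builds_fin_lcw (G : SimpleGraph V) :
    ∃ e : List (LcwOp (Fin (lcw G))), Builds e G := by
  classical
  obtain ⟨e, he⟩ := G.exists_builds
  exact Nat.sInf_mem (s := {k | ∃ e : List (LcwOp (Fin k)), Builds e G}) ⟨_, he.exists_fin⟩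

end Width

theorem WfExpr.append {L : Type} {l₁ l₂ : List (LcwOp L)} (h₁ : WfExpr l₁)
    (h₂ : WfExpr l₂) : WfExpr (l₁ ++ l₂) := by
  intro op hop
  rcases List.mem_append.1 hop with hop | hop
  exacts [h₁ op hop, h₂ op hop]

section Complement

variable {L : Type}

/- In the simulation below, `F` is the final state of the expression being simulated and `none`
is the fresh label, carried only by the vertex currently being inserted. -/
open Classical in
noncomputable def complJoinLabels (F s : LcwState L) : List L :=
  ((List.range s.n).filter fun u => ¬ F.adj u s.n).filterMap s.lab

theorem mem_complJoinLabels {F s : LcwState L} {b : L} :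
    b ∈ complJoinLabels F s ↔ ∃ u < s.n, ¬ F.adj u s.n ∧ s.lab u = some b := by
  simp [complJoinLabels, and_assoc]

theorem exists_mem_complJoinLabels_iff {F s : LcwState L} (hs : s.Valid)
    (hlab : ∀ u w, u < s.n → w < s.n → s.lab u = s.lab w → (F.adj u s.n ↔ F.adj w s.n))
    (v : ℕ) :
    (∃ b ∈ complJoinLabels F s, s.lab v = some b) ↔ v < s.n ∧ ¬ F.adj v s.n := by
  simp only [mem_complJoinLabels]
  constructor
  · rintro ⟨b, ⟨u, hu, hnF, hub⟩, hvb⟩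
    have hv : v < s.n := (hs.isSome_lab_iff v).1 (by simp [hvb])
    exact ⟨hv, fun hF => hnF ((hlab u v hu hv (hub.trans hvb.symm)).2 hF)⟩
  · rintro ⟨hv, hnF⟩
    obtain ⟨b, hb⟩ := Option.isSome_iff_exists.1 ((hs.isSome_lab_iff v).2 hv)
    exact ⟨b, ⟨v, hv, hnF, hb⟩, hb⟩

variable [DecidableEq L]

noncomputable def complOp (F s : LcwState L) : LcwOp L → List (LcwOp (Option L))
  | .insert a => .insert none ::
      ((complJoinLabels F s).map fun b => (none, some b)).map (fun p => .join p.1 p.2) ++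
      [.relabel none (some a)]
  | .join _ _ => []
  | .relabel i j => [.relabel (some i) (some j)]

noncomputable def complExpr (F : LcwState L) :
    List (LcwOp L) → LcwState L → List (LcwOp (Option L))
  | [], _ => []
  | op :: l, s => complOp F s op ++ complExpr F l (s.step op)

theorem wfExpr_complExpr (F : LcwState L) (l : List (LcwOp L)) (s : LcwState L) :
    WfExpr (complExpr F l s) := by
  induction l generalizing s with
  | nil => simp [complExpr, WfExpr]
  | cons op l ih =>
    refine WfExpr.append ?_ (ih _)
    cases op <;> simp [complOp, WfExpr, or_imp, forall_and]

structure ComplSim (F s : LcwState L) (s' : LcwState (Option L)) : Prop where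
  n_eq : s'.n = s.n
  lab_eq : ∀ v, s'.lab v = (s.lab v).map some
  adj_iff : ∀ u v, s'.adj u v ↔ u ≠ v ∧ u < s.n ∧ v < s.n ∧ ¬ F.adj u v

variable {F s : LcwState L} {s' : LcwState (Option L)}

theorem ComplSim.step_join (h : ComplSim F s s') (i j : L) :
    ComplSim F (s.step (.join i j)) ((complOp F s (.join i j)).foldl LcwState.step s') :=
  ⟨h.n_eq, h.lab_eq, h.adj_iff⟩

theorem ComplSim.step_relabel (h : ComplSim F s s') (i j : L) :
    ComplSim F (s.step (.relabel i j)) ((complOp F s (.relabel i j)).foldl LcwState.step s') := by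
  refine ⟨h.n_eq, fun v => ?_, h.adj_iff⟩
  simp only [complOp, List.foldl_cons, List.foldl_nil, LcwState.step, h.lab_eq]
  split_ifs <;> simp_all

theorem ComplSim.step_insert (h : ComplSim F s s') (hs : s.Valid) (hF : F.Valid)
    (hlab : ∀ u w, u < s.n → w < s.n → s.lab u = s.lab w → (F.adj u s.n ↔ F.adj w s.n))
    (a : L) :
    ComplSim F (s.step (.insert a)) ((complOp F s (.insert a)).foldl LcwState.step s') := by
  have hnew := exists_mem_complJoinLabels_iff hs hlab
  simp only [complOp, List.foldl_cons, List.foldl_append, LcwState.foldl_map_join, List.foldl_nil]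
  refine ⟨?_, fun v => ?_, fun u v => ?_⟩
  · simp [LcwState.step, h.n_eq]
  · by_cases hv : v = s.n <;> simp [LcwState.step, h.n_eq, h.lab_eq, hv]
  · have hsymm : ∀ x, F.adj s.n x ↔ F.adj x s.n := fun x => ⟨hF.adj_symm, hF.adj_symm⟩
    by_cases hu : u = s.n <;> by_cases hv : v = s.n
    · simp [LcwState.step, h.adj_iff, hu, hv]
    · subst hu
      simp [LcwState.step, h.n_eq, h.lab_eq, h.adj_iff, hv, Ne.symm hv, hsymm, hnew,
        Nat.le_iff_lt_or_eq]
    · subst hv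
      simp [LcwState.step, h.n_eq, h.lab_eq, h.adj_iff, hu, hnew, Nat.le_iff_lt_or_eq]
    · simp [LcwState.step, h.n_eq, h.lab_eq, h.adj_iff, hu, hv, Nat.le_iff_lt_or_eq]

theorem ComplSim.foldl (l : List (LcwOp L)) (hs : s.Valid) (hF : l.foldl LcwState.step s = F)
    (h : ComplSim F s s') : ComplSim F F ((complExpr F l s).foldl LcwState.step s') := by
  induction l generalizing s s' with
  | nil => exact hF ▸ h
  | cons op l ih =>
    rw [complExpr, List.foldl_append]
    refine ih (hs.step op) hF ?_
    cases op with
    | insert a =>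
      exact h.step_insert hs (hF ▸ hs.foldl _)
        (fun u w hu hw hl => hF ▸ hs.foldl_insert_adj_iff_of_lab_eq a l hu hw hl) a
    | join i j => exact h.step_join i j
    | relabel i j => exact h.step_relabel i j

theorem Builds.compl {V : Type} [Fintype V] {G : SimpleGraph V} {e : List (LcwOp L)}
    (h : Builds e G) : Builds (complExpr (runLcw e) e (LcwState.init L)) Gᶜ := by
  obtain ⟨φ, hwf, hinj, hn, hlt, hadj⟩ := h
  have hsim : ComplSim (runLcw e) (runLcw e) (runLcw (complExpr (runLcw e) e (LcwState.init L))) :=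
    ComplSim.foldl e LcwState.valid_init rfl
      ⟨rfl, fun _ => rfl, fun _ _ => by simp [LcwState.init]⟩
  refine ⟨φ, wfExpr_complExpr _ _ _, hinj, hsim.n_eq ▸ hn, hsim.n_eq ▸ hlt, fun u v => ?_⟩
  rw [hsim.adj_iff, SimpleGraph.compl_adj, hadj, hinj.ne_iff]
  simp [hlt]

end Complement

theorem lcw_compl_le {V : Type} [Fintype V] (G : SimpleGraph V) : lcw Gᶜ ≤ lcw G + 1 := by
  obtain ⟨e, he⟩ := exists_builds_fin_lcw G
  simpa using lcw_le_card_of_builds he.compl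

/-- for every finite graph `G`,
`lcw G - 1 ≤ lcw Gᶜ ≤ lcw G + 1`. -/
theorem statement_1 {V : Type} [Fintype V] (G : SimpleGraph V) :
    lcw G - 1 ≤ lcw Gᶜ ∧ lcw Gᶜ ≤ lcw G + 1 := by
  have h := lcw_compl_le Gᶜ
  rw [compl_compl] at h
  exact ⟨by omega, lcw_compl_le G⟩
end

section
/- In the process of building a finite graph G via any efficient lcw expression, there is a point in the process at which all lcw(G) labels are simultaneously in use (that is, each of the lcw(G) labels currently labels at least one vertex). -/
/-! If at every moment of the run of `e` some label is free, then `e` can be replayed over an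
alphabet with one label fewer: keep a renaming of the labels that is injective on the labels
currently in use. A vertex inserted with a label not in use gets a name not taken by any label in
use, which exists because after the insertion at most `lcw G - 1` labels are in use; a relabelling
`i → j` onto a label `j` not in use just hands the name of `i` over to `j`. This contradicts the
minimality of `lcw G`. -/

open Function Set

section Renaming

variable {α β : Type*}

theorem eqOn_update_of_notMem [DecidableEq α] {σ : α → β} {T : Set α} {a : α} (c : β)
    (ha : a ∉ T) : EqOn (update σ a c) σ T :=
  fun _ hx => update_of_ne (ne_of_mem_of_not_mem hx ha) _ _

theorem injOn_insert_update [DecidableEq α] {σ : α → β} {T : Set α} {a : α} {c : β}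
    (ha : a ∉ T) (hσ : InjOn σ T) (hc : c ∉ σ '' T) : InjOn (update σ a c) (insert a T) := by
  have heq := eqOn_update_of_notMem (σ := σ) c ha
  rw [injOn_insert ha, heq.injOn_iff, heq.image_eq, update_self]
  exact ⟨hσ, hc⟩

theorem exists_notMem_image_of_ncard_lt [Finite α] (σ : α → β) {T : Set α}
    (hT : T.ncard < Nat.card β) : ∃ c, c ∉ σ '' T := by
  by_contra! hc
  have himage : (σ '' T).ncard ≤ T.ncard := ncard_image_le
  rw [eq_univ_of_forall hc, ncard_univ] at himage
  omega

end Renaming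

namespace LcwState

variable {L M : Type}

def inUse (s : LcwState L) : Set L := {ℓ | ∃ v, s.lab v = some ℓ}

structure IsRenaming (σ : L → M) (s : LcwState L) (s' : LcwState M) : Prop where
  n_eq : s'.n = s.n
  adj_eq : s'.adj = s.adj
  lab_eq : ∀ v, s'.lab v = (s.lab v).map σ
  injOn : InjOn σ s.inUse

theorem map_lab_eq_of_eqOn {s : LcwState L} {σ σ' : L → M} (hσ : EqOn σ' σ s.inUse) (v : ℕ) :
    (s.lab v).map σ' = (s.lab v).map σ := by
  cases hv : s.lab v with
  | none => rfl
  | some ℓ => simp [hσ ⟨v, hv⟩]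

theorem IsRenaming.lab_eq_some_iff {σ : L → M} {s : LcwState L} {s' : LcwState M}
    (h : IsRenaming σ s s') {ℓ : L} (hℓ : ℓ ∈ s.inUse) (v : ℕ) :
    s'.lab v = some (σ ℓ) ↔ s.lab v = some ℓ := by
  rw [h.lab_eq]
  constructor
  · intro hv
    obtain ⟨m, hm, hσm⟩ := Option.map_eq_some_iff.mp hv
    rw [hm, h.injOn ⟨v, hm⟩ hℓ hσm]
  · intro hv
    rw [hv]
    rfl

variable [DecidableEq L] [DecidableEq M] {s : LcwState L}

theorem inUse_step_insert {a : L} (hnew : s.lab s.n = none) :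
    (s.step (.insert a)).inUse = insert a s.inUse := by
  ext ℓ
  simp only [inUse, step, mem_ofPred_eq, mem_insert_iff]
  constructor
  · rintro ⟨v, hv⟩
    split_ifs at hv
    · exact Or.inl (Option.some_injective _ hv).symm
    · exact Or.inr ⟨v, hv⟩
  · rintro (rfl | ⟨v, hv⟩)
    · exact ⟨s.n, if_pos rfl⟩
    · refine ⟨v, ?_⟩
      rwa [if_neg (by rintro rfl; simp [hnew] at hv)]

theorem inUse_step_relabel {i j : L} (hi : i ∈ s.inUse) :
    (s.step (.relabel i j)).inUse = insert j (s.inUse \ {i}) := by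
  ext ℓ
  simp only [inUse, step, mem_ofPred_eq, mem_insert_iff, mem_sdiff, mem_singleton_iff]
  constructor
  · rintro ⟨v, hv⟩
    split_ifs at hv with h
    · exact Or.inl (Option.some_injective _ hv).symm
    · exact Or.inr ⟨⟨v, hv⟩, by rintro rfl; exact h hv⟩
  · rintro (rfl | ⟨⟨v, hv⟩, hℓi⟩)
    · obtain ⟨v, hv⟩ := hi
      exact ⟨v, if_pos hv⟩
    · refine ⟨v, ?_⟩
      rwa [if_neg (by rw [hv]; simpa using hℓi)]

theorem step_relabel_of_notMem {i : L} (hi : i ∉ s.inUse) (j : L) :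
    s.step (.relabel i j) = s := by
  obtain ⟨n, adj, lab⟩ := s
  simp only [step, mk.injEq, true_and]
  funext v
  exact if_neg fun h => hi ⟨v, h⟩

theorem step_join_of_notMem {i j : L} (h : i ∉ s.inUse ∨ j ∉ s.inUse) :
    s.step (.join i j) = s := by
  obtain ⟨n, adj, lab⟩ := s
  simp only [step, mk.injEq, true_and, and_true]
  funext u v
  simp only [eq_iff_iff, or_iff_left_iff_imp]
  rintro ⟨-, ⟨hu, hv⟩ | ⟨hu, hv⟩⟩ <;> rcases h with h | h
  exacts [(h ⟨u, hu⟩).elim, (h ⟨v, hv⟩).elim, (h ⟨v, hv⟩).elim, (h ⟨u, hu⟩).elim]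

variable {s' : LcwState M} {σ σ' : L → M}

theorem IsRenaming.step_insert (h : IsRenaming σ s s') {a : L} (hnew : s.lab s.n = none)
    (hσ : EqOn σ' σ s.inUse) (hinj : InjOn σ' (insert a s.inUse)) :
    IsRenaming σ' (s.step (.insert a)) (s'.step (.insert (σ' a))) where
  n_eq := by simp [step, h.n_eq]
  adj_eq := h.adj_eq
  lab_eq v := by
    simp only [step, h.n_eq]
    split_ifs
    · rfl
    · rw [h.lab_eq, map_lab_eq_of_eqOn hσ]
  injOn := by rwa [inUse_step_insert hnew]

theorem IsRenaming.step_join (h : IsRenaming σ s s') {i j : L} (hi : i ∈ s.inUse)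
    (hj : j ∈ s.inUse) : IsRenaming σ (s.step (.join i j)) (s'.step (.join (σ i) (σ j))) where
  n_eq := h.n_eq
  adj_eq := by
    funext u v
    simp only [step, h.adj_eq, h.lab_eq_some_iff hi, h.lab_eq_some_iff hj]
  lab_eq := h.lab_eq
  injOn := h.injOn

theorem IsRenaming.step_relabel (h : IsRenaming σ s s') {i j : L} (hi : i ∈ s.inUse)
    (hσ : EqOn σ' σ s.inUse) (hinj : InjOn σ' (s.step (.relabel i j)).inUse) :
    IsRenaming σ' (s.step (.relabel i j)) (s'.step (.relabel (σ' i) (σ' j))) where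
  n_eq := h.n_eq
  adj_eq := h.adj_eq
  lab_eq v := by
    simp only [step, hσ hi, h.lab_eq_some_iff hi]
    split_ifs
    · rfl
    · rw [h.lab_eq, map_lab_eq_of_eqOn hσ]
  injOn := hinj

theorem IsRenaming.exists_step [Finite L] (h : IsRenaming σ s s') (op : LcwOp L)
    (hwf : ∀ i j, op = .join i j → i ≠ j) (hnew : s.lab s.n = none)
    (hcard : (s.step op).inUse.ncard ≤ Nat.card M) :
    ∃ (ops : List (LcwOp M)) (σ' : L → M), WfExpr ops ∧
      IsRenaming σ' (s.step op) (ops.foldl step s') := by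
  cases op with
  | insert a =>
    by_cases ha : a ∈ s.inUse
    · refine ⟨[.insert (σ a)], σ, by simp [WfExpr], ?_⟩
      exact h.step_insert hnew (eqOn_refl _ _) (by rw [insert_eq_of_mem ha]; exact h.injOn)
    · rw [inUse_step_insert hnew, ncard_insert_of_notMem ha] at hcard
      obtain ⟨c, hc⟩ := exists_notMem_image_of_ncard_lt σ (by omega : s.inUse.ncard < _)
      refine ⟨[.insert c], update σ a c, by simp [WfExpr], ?_⟩
      simpa using h.step_insert hnew (eqOn_update_of_notMem c ha)
        (injOn_insert_update ha h.injOn hc)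
  | join i j =>
    by_cases hij : i ∈ s.inUse ∧ j ∈ s.inUse
    · refine ⟨[.join (σ i) (σ j)], σ, ?_, h.step_join hij.1 hij.2⟩
      simpa [WfExpr] using h.injOn.ne hij.1 hij.2 (hwf i j rfl)
    · refine ⟨[], σ, by simp [WfExpr], ?_⟩
      rwa [step_join_of_notMem (not_and_or.mp hij)]
  | relabel i j =>
    by_cases hi : i ∈ s.inUse
    swap
    · refine ⟨[], σ, by simp [WfExpr], ?_⟩
      rwa [step_relabel_of_notMem hi]
    by_cases hj : j ∈ s.inUse
    · refine ⟨[.relabel (σ i) (σ j)], σ, by simp [WfExpr], ?_⟩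
      refine h.step_relabel hi (eqOn_refl _ _) (h.injOn.mono ?_)
      rw [inUse_step_relabel hi]
      exact insert_subset hj sdiff_subset
    · -- the class `j` is new: it takes over the name of the class `i`, which disappears
      have hfresh : σ i ∉ σ '' (s.inUse \ {i}) := by
        rintro ⟨x, ⟨hx, hxi⟩, hσx⟩
        exact hxi (h.injOn hx hi hσx)
      have hj' : j ∉ s.inUse \ {i} := fun hj' => hj hj'.1
      have hne : i ≠ j := fun hij => hj (hij ▸ hi)
      refine ⟨[.relabel (σ i) (σ i)], update σ j (σ i), by simp [WfExpr], ?_⟩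
      have key := h.step_relabel hi (eqOn_update_of_notMem (σ i) hj) <| by
        rw [inUse_step_relabel hi]
        exact injOn_insert_update hj' (h.injOn.mono sdiff_subset) hfresh
      rwa [update_self, update_of_ne hne] at key

end LcwState

theorem runLcw_append {L : Type} [DecidableEq L] (e₁ e₂ : List (LcwOp L)) :
    runLcw (e₁ ++ e₂) = e₂.foldl LcwState.step (runLcw e₁) := by
  simp [runLcw]

theorem runLcw_append_singleton {L : Type} [DecidableEq L] (e : List (LcwOp L)) (op : LcwOp L) :
    runLcw (e ++ [op]) = (runLcw e).step op := by
  simp [runLcw]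

theorem wfExpr_append {L : Type} {e₁ e₂ : List (LcwOp L)} :
    WfExpr (e₁ ++ e₂) ↔ WfExpr e₁ ∧ WfExpr e₂ := by
  simp only [WfExpr, List.mem_append, or_imp, forall_and]

theorem runLcw_lab_eq_none_iff {L : Type} [DecidableEq L] (e : List (LcwOp L)) (v : ℕ) :
    (runLcw e).lab v = none ↔ (runLcw e).n ≤ v := by
  induction e using List.reverseRecOn generalizing v with
  | nil => simp [runLcw, LcwState.init]
  | append_singleton e op ih =>
    rw [runLcw_append_singleton]
    cases op with
    | insert a =>
      simp only [LcwState.step]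
      split_ifs with hv
      · simp [hv]
      · rw [ih]
        omega
    | join i j => exact ih v
    | relabel i j =>
      simp only [LcwState.step]
      split_ifs with hv
      · simp only [false_iff, not_le]
        rw [← not_le, ← ih, hv]
        simp
      · exact ih v

theorem exists_isRenaming_runLcw {L M : Type} [DecidableEq L] [DecidableEq M] [Finite L]
    [Nonempty M] (e : List (LcwOp L)) (hwf : WfExpr e)
    (hcard : ∀ t ≤ e.length, (runLcw (e.take t)).inUse.ncard ≤ Nat.card M) :
    ∃ (e' : List (LcwOp M)) (σ : L → M), WfExpr e' ∧ (runLcw e).IsRenaming σ (runLcw e') := by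
  induction e using List.reverseRecOn with
  | nil =>
    refine ⟨[], fun _ => Classical.arbitrary M, by simp [WfExpr], rfl, rfl, fun _ => rfl, ?_⟩
    rintro _ ⟨_, hv⟩
    cases hv
  | append_singleton e op ih =>
    rw [wfExpr_append] at hwf
    have hprefix : ∀ t ≤ e.length, (runLcw (e.take t)).inUse.ncard ≤ Nat.card M := by
      intro t ht
      have ht' : t ≤ (e ++ [op]).length := by simp only [List.length_append]; omega
      simpa [List.take_append_of_le_length ht] using hcard t ht'
    obtain ⟨e', σ, hwf', hσ⟩ := ih hwf.1 hprefix
    obtain ⟨ops, σ', hops, hσ'⟩ := hσ.exists_step op (fun i j hop => hwf.2 op (by simp) i j hop)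
      ((runLcw_lab_eq_none_iff e _).2 le_rfl)
      (by simpa only [List.take_length, runLcw_append_singleton] using hcard _ le_rfl)
    refine ⟨e' ++ ops, σ', wfExpr_append.2 ⟨hwf', hops⟩, ?_⟩
    rwa [runLcw_append_singleton, runLcw_append]

theorem LcwState.IsRenaming.buildsVia {L M V : Type} [DecidableEq L] [DecidableEq M] [Fintype V]
    {e : List (LcwOp L)} {e' : List (LcwOp M)} {σ : L → M}
    (hσ : (runLcw e).IsRenaming σ (runLcw e')) (hwf' : WfExpr e') {G : SimpleGraph V}
    {f : V → ℕ} (he : BuildsVia e G f) : BuildsVia e' G f := by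
  obtain ⟨-, hf, hn, hlt, hadj⟩ := he
  exact ⟨hwf', hf, hσ.n_eq ▸ hn, hσ.n_eq ▸ hlt, hσ.adj_eq ▸ hadj⟩

theorem builds_nil {L V : Type} [DecidableEq L] [Fintype V] [IsEmpty V] (G : SimpleGraph V) :
    Builds ([] : List (LcwOp L)) G :=
  ⟨isEmptyElim, by simp [WfExpr], fun a => isEmptyElim a, by simp [runLcw, LcwState.init],
    isEmptyElim, fun u => isEmptyElim u⟩

theorem runLcw_n_eq_zero_of_inUse_eq_empty {L : Type} [DecidableEq L] {e : List (LcwOp L)}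
    (h : (runLcw e).inUse = ∅) : (runLcw e).n = 0 := by
  rw [← Nat.le_zero, ← runLcw_lab_eq_none_iff, Option.eq_none_iff_forall_ne_some]
  intro ℓ hℓ
  exact h.subset ⟨0, hℓ⟩

theorem lcw_le_of_ncard_inUse_le {V : Type} [Fintype V] (G : SimpleGraph V) {L : Type}
    [DecidableEq L] [Finite L] {e : List (LcwOp L)} (he : Builds e G) {m : ℕ}
    (hm : ∀ t ≤ e.length, (runLcw (e.take t)).inUse.ncard ≤ m) : lcw G ≤ m := by
  apply Nat.sInf_le
  obtain ⟨f, hf⟩ := he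
  rcases m with _ | m
  · have hempty : (runLcw e).inUse = ∅ :=
      (ncard_eq_zero).1 (Nat.le_zero.1 (by simpa using hm e.length le_rfl))
    have : IsEmpty V := by
      rw [← Fintype.card_eq_zero_iff, ← hf.2.2.1, runLcw_n_eq_zero_of_inUse_eq_empty hempty]
    exact ⟨[], builds_nil G⟩
  · obtain ⟨e', σ, hwf', hσ⟩ :=
      exists_isRenaming_runLcw (M := Fin (m + 1)) e hf.1 (by simpa using hm)
    exact ⟨e', f, hσ.buildsVia hwf' hf⟩

/-- Proposition `lem-all-in-use`: in the process of building
`G` via any efficient lcw expression (one over exactly `lcw G` labels), there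
is a point at which all `lcw G` labels are simultaneously in use. -/
theorem statement_3 {V : Type} [Fintype V] (G : SimpleGraph V)
    (e : List (LcwOp (Fin (lcw G)))) (he : Builds e G) :
    ∃ t ≤ e.length, ∀ ℓ : Fin (lcw G), ∃ v : ℕ,
      (runLcw (e.take t)).lab v = some ℓ := by
  by_contra! hfree
  have hcard : ∀ t ≤ e.length, (runLcw (e.take t)).inUse.ncard ≤ lcw G - 1 := by
    intro t ht
    obtain ⟨ℓ, hℓ⟩ := hfree t ht
    have hne : (runLcw (e.take t)).inUse ≠ univ := fun h => by
      obtain ⟨v, hv⟩ : ℓ ∈ (runLcw (e.take t)).inUse := h ▸ mem_univ ℓ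
      exact hℓ v hv
    have := ncard_lt_card hne
    simp only [Nat.card_eq_fintype_card, Fintype.card_fin] at this
    omega
  obtain ⟨ℓ, -⟩ := hfree 0 (Nat.zero_le _)
  have := lcw_le_of_ncard_inUse_le G he hcard
  have := ℓ.pos
  omega
end
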